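/- arXiv:1903.03488 — 3 statements merged into one kernel-verified Lean document; each statement's English description precedes it below -/
import Mathlib

section
/- For every ε > 0 and dimension d, there exists a function f : ℝ^d → ℝ^d computable by a ReLU network with two hidden layers of width 3d, such that f(x) = x for all x ∈ [0,1]^d, and f(x) = 0 for all x with dist(x, [0,1]^d) > ε. -/
/-- Coordinatewise ReLU. -/
def relu {n : ℕ} (v : Fin n → ℝ) : Fin n → ℝ := fun i => max (v i) 0

/-!
Let `P x = ∑ j, (σ(-x j) + σ(x j - 1))` be the `ℓ¹` distance from `x` to the cube `[0,1]^d`; it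
dominates the Euclidean distance to the cube. The network computes
`f x i = σ(σ(x i) - N * P x)`: hidden neuron `(k, j)` of the first layer is `σ(x j)`, `σ(-x j)` or
`σ(x j - 1)` according as `k = 0, 1, 2`, and neuron `(0, i)` of the second one forms
`σ(x i) - N * P x`. On the cube `P = 0`, so `f x = x`. Since `σ(x i) ≤ 1 + P x`, the choice
`N = 1 + 1/ε` kills every output as soon as `P x > ε`, in particular at Euclidean distance `> ε`
from the cube.
-/

open Matrix Set

theorem EuclideanSpace.dist_le_sum_dist {ι : Type*} [Fintype ι] (x y : EuclideanSpace ℝ ι) :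
    dist x y ≤ ∑ i, dist (x i) (y i) := by
  rw [EuclideanSpace.dist_eq]
  refine Real.sqrt_le_iff.2 ⟨Finset.sum_nonneg fun _ _ => dist_nonneg, ?_⟩
  exact Finset.sum_sq_le_sq_sum_of_nonneg fun _ _ => dist_nonneg

theorem relu_net_reindex {κ : Type*} [Fintype κ] {m n : ℕ} (e : κ ≃ Fin n)
    (A₁ : Matrix κ (Fin m) ℝ) (c₁ : κ → ℝ) (A₂ : Matrix κ κ ℝ) (c₂ : κ → ℝ)
    (A₃ : Matrix (Fin m) κ ℝ) (x : Fin m → ℝ) :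
    reindex (Equiv.refl _) e A₃ *ᵥ
        relu (reindex e e A₂ *ᵥ relu (reindex e (Equiv.refl _) A₁ *ᵥ x + c₁ ∘ e.symm)
          + c₂ ∘ e.symm) =
      A₃ *ᵥ ((A₂ *ᵥ ((A₁ *ᵥ x + c₁) ⊔ 0) + c₂) ⊔ 0) := by
  simp only [reindex_apply, submatrix_mulVec_equiv]
  simp [Function.comp_def, relu, Pi.sup_def]

namespace ReluBox

variable {d : ℕ}

def cubeExcess (x : Fin d → ℝ) : ℝ := ∑ j, (max (-x j) 0 + max (x j - 1) 0)

def cubeCutoff (N : ℝ) (x : Fin d → ℝ) : Fin d → ℝ :=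
  fun i => max (max (x i) 0 - N * cubeExcess x) 0

theorem dist_clamp_unitInterval (t : ℝ) : dist t (min (max t 0) 1) = max (-t) 0 + max (t - 1) 0 := by
  rw [Real.dist_eq]
  rcases le_total t 0 with h | h
  · simp [h, h.trans zero_le_one, abs_of_nonpos]
  · rcases le_total t 1 with h' | h' <;> simp [h, h', abs_of_nonneg]

theorem cubeExcess_eq_zero {x : Fin d → ℝ} (hx : ∀ i, x i ∈ Icc (0 : ℝ) 1) :
    cubeExcess x = 0 :=
  Finset.sum_eq_zero fun j _ => by simp [(hx j).1, (hx j).2]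

theorem max_zero_le_one_add_cubeExcess (x : Fin d → ℝ) (i : Fin d) :
    max (x i) 0 ≤ 1 + cubeExcess x := by
  have hi : max (x i - 1) 0 ≤ cubeExcess x :=
    (le_add_of_nonneg_left (le_max_right _ _)).trans
      (Finset.single_le_sum (f := fun j => max (-x j) 0 + max (x j - 1) 0)
        (fun j _ => by positivity) (Finset.mem_univ i))
  exact max_le (by linarith [le_max_left (x i - 1) 0]) (by linarith [le_max_right (x i - 1) 0])

theorem infDist_unitCube_le_cubeExcess (x : EuclideanSpace ℝ (Fin d)) :
    Metric.infDist x {y : EuclideanSpace ℝ (Fin d) | ∀ i, y i ∈ Icc (0 : ℝ) 1} ≤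
      cubeExcess (fun j => x j) := by
  let y : EuclideanSpace ℝ (Fin d) := WithLp.toLp 2 fun i => min (max (x i) 0) 1
  have hy : ∀ i, y i ∈ Icc (0 : ℝ) 1 := fun i =>
    ⟨le_min (le_max_right _ _) zero_le_one, min_le_right _ _⟩
  calc Metric.infDist x _ ≤ dist x y := Metric.infDist_le_dist_of_mem (by exact hy)
    _ ≤ ∑ i, dist (x i) (y i) := EuclideanSpace.dist_le_sum_dist x y
    _ = cubeExcess (fun j => x j) := Finset.sum_congr rfl fun i _ => dist_clamp_unitInterval (x i)

theorem cubeCutoff_of_mem (N : ℝ) {x : Fin d → ℝ} (hx : ∀ i, x i ∈ Icc (0 : ℝ) 1) :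
    cubeCutoff N x = x := by
  ext i
  simp [cubeCutoff, cubeExcess_eq_zero hx, (hx i).1]

theorem cubeCutoff_eq_zero {ε : ℝ} (hε : 0 < ε) {x : Fin d → ℝ} (hx : ε < cubeExcess x) :
    cubeCutoff (1 + ε⁻¹) x = 0 := by
  ext i
  have hP : 1 < ε⁻¹ * cubeExcess x := by
    rwa [← div_eq_inv_mul, one_lt_div hε]
  have := max_zero_le_one_add_cubeExcess x i
  simp only [cubeCutoff, Pi.zero_apply, max_eq_right_iff]
  linarith [add_mul 1 ε⁻¹ (cubeExcess x)]

def firstLayer : Matrix (Fin 3 × Fin d) (Fin d) ℝ :=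
  of fun p j => ![1, -1, 1] p.1 * (1 : Matrix (Fin d) (Fin d) ℝ) p.2 j

def firstBias : Fin 3 × Fin d → ℝ := fun p => ![0, 0, -1] p.1

def secondLayer (N : ℝ) : Matrix (Fin 3 × Fin d) (Fin 3 × Fin d) ℝ :=
  of fun p q => if p.1 = 0 then (1 : Matrix _ _ ℝ) p q - if q.1 = 0 then 0 else N else 0

def outputLayer : Matrix (Fin d) (Fin 3 × Fin d) ℝ :=
  of fun i q => (1 : Matrix (Fin 3 × Fin d) (Fin 3 × Fin d) ℝ) (0, i) q

theorem firstLayer_mulVec (x : Fin d → ℝ) (p : Fin 3 × Fin d) :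
    (firstLayer *ᵥ x) p = ![1, -1, 1] p.1 * x p.2 := by
  simp [firstLayer, mulVec, dotProduct, one_apply]

theorem secondLayer_mulVec (N : ℝ) (v : Fin 3 × Fin d → ℝ) (i : Fin d) :
    (secondLayer N *ᵥ v) (0, i) = v (0, i) - N * ∑ j, (v (1, j) + v (2, j)) := by
  simp [secondLayer, mulVec, dotProduct, sub_mul, Fintype.sum_prod_type, Fin.sum_univ_three,
    one_apply, Finset.sum_add_distrib, mul_add, Finset.mul_sum]

theorem outputLayer_mulVec (v : Fin 3 × Fin d → ℝ) (i : Fin d) :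
    (outputLayer *ᵥ v) i = v (0, i) := by
  simp [outputLayer, mulVec, dotProduct, one_apply]

theorem relu_net_eq_cubeCutoff (N : ℝ) (x : Fin d → ℝ) :
    outputLayer *ᵥ ((secondLayer N *ᵥ ((firstLayer *ᵥ x + firstBias) ⊔ 0) + 0) ⊔ 0) =
      cubeCutoff N x := by
  ext i
  simp [outputLayer_mulVec, secondLayer_mulVec, firstLayer_mulVec, firstBias, cubeCutoff,
    cubeExcess, sub_eq_add_neg]

end ReluBox

open ReluBox in
/-- For every ε > 0 there is a two-hidden-layer ReLU network of width 3d
computing f : ℝ^d → ℝ^d with f = id on [0,1]^d and f = 0 at Euclidean distance > ε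
from [0,1]^d. -/
theorem exists_relu_box_identity
    (d : ℕ) (ε : ℝ) (hε : 0 < ε) :
    ∃ (f : EuclideanSpace ℝ (Fin d) → EuclideanSpace ℝ (Fin d))
      (W1 : Matrix (Fin (3 * d)) (Fin d) ℝ) (b1 : Fin (3 * d) → ℝ)
      (W2 : Matrix (Fin (3 * d)) (Fin (3 * d)) ℝ) (b2 : Fin (3 * d) → ℝ)
      (W3 : Matrix (Fin d) (Fin (3 * d)) ℝ) (b3 : Fin d → ℝ),
      (∀ x : EuclideanSpace ℝ (Fin d),
        f x = (W3.mulVec (relu (W2.mulVec (relu (W1.mulVec (fun j => x j) + b1)) + b2)) + b3 :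
          Fin d → ℝ)) ∧
      (∀ x : EuclideanSpace ℝ (Fin d), (∀ i, x i ∈ Set.Icc (0 : ℝ) 1) → f x = x) ∧
      (∀ x : EuclideanSpace ℝ (Fin d),
        Metric.infDist x {y : EuclideanSpace ℝ (Fin d) | ∀ i, y i ∈ Set.Icc (0 : ℝ) 1} > ε →
        f x = 0) := by
  let e : Fin 3 × Fin d ≃ Fin (3 * d) := finProdFinEquiv
  let N := 1 + ε⁻¹
  refine ⟨fun x => WithLp.toLp 2 (cubeCutoff N x), reindex e (Equiv.refl _) firstLayer,
    firstBias ∘ e.symm, reindex e e (secondLayer N), 0, reindex (Equiv.refl _) e outputLayer, 0,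
    fun x => ?_, fun x hx => ?_, fun x hx => ?_⟩
  · simpa [← relu_net_eq_cubeCutoff] using
      (relu_net_reindex e firstLayer firstBias (secondLayer N) 0 outputLayer x.ofLp).symm
  · exact congrArg (WithLp.toLp 2) (cubeCutoff_of_mem N hx)
  · exact congrArg (WithLp.toLp 2)
      (cubeCutoff_eq_zero hε (hx.trans_le (infDist_unitCube_le_cubeExcess x)))
end

section
/- Let f : ℝ^d → ℝ be a function whose domain is partitioned into fewer than r^n convex regions, on each of which f is affine. Let K_n = ⋃_{i ∈ [r]^n} F_i(K_0) where the sets F_i(K_0) are pairwise at positive distance and each has nonempty interior (contains an interior point at distance γ > 0 from its boundary). Then f cannot satisfy sign(f) = +1 on ⋃_i (F_i(K_0))^γ and sign(f) = −1 on the complement of K_n. Consequently any ReLU network of depth t and width k with (ek/d)^{td} < r^n fails to separate K_n^γ from ℝ^d \ K_n. -/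
/-!
Pick a point of each γ-interior. There are `r ^ n` of them and fewer regions, so two points
`a ∈ A i`, `b ∈ A j` with `i ≠ j` lie in one convex region, on which `f` is affine. Then `f ≥ 0`
on the whole segment `[a, b]`, so the segment lies in `⋃ k, A k`. But a connected set covered by
finitely many pairwise positively separated sets lies in only one of them.
-/

open Metric Set

theorem Metric.areSeparated_of_le_dist {X : Type*} [PseudoMetricSpace X] {s t : Set X}
    (h : ∃ ε > 0, ∀ a ∈ s, ∀ b ∈ t, ε ≤ dist a b) : AreSeparated s t := by
  obtain ⟨ε, hε, hst⟩ := h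
  exact ⟨ENNReal.ofReal ε, by simpa using hε, fun a ha b hb =>
    edist_dist a b ▸ ENNReal.ofReal_le_ofReal (hst a ha b hb)⟩

theorem IsPreconnected.subset_left_of_areSeparated {X : Type*} [PseudoEMetricSpace X]
    {S s t : Set X} (hS : IsPreconnected S) (hst : AreSeparated s t) (hSst : S ⊆ s ∪ t)
    (hSs : (S ∩ s).Nonempty) : S ⊆ s := by
  obtain ⟨r, hr, hsep⟩ := hst
  set u := ⋃ a ∈ s, eball a (r / 2)
  set v := ⋃ b ∈ t, eball b (r / 2)
  have hsu : s ⊆ u := fun a ha => mem_biUnion ha (mem_eball_self (ENNReal.half_pos hr))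
  have htv : t ⊆ v := fun b hb => mem_biUnion hb (mem_eball_self (ENNReal.half_pos hr))
  have huv : Disjoint u v := by
    refine disjoint_left.mpr fun z hzu hzv => ?_
    obtain ⟨a, ha, hza⟩ := mem_iUnion₂.mp hzu
    obtain ⟨b, hb, hzb⟩ := mem_iUnion₂.mp hzv
    have : edist a b < r := calc
      edist a b ≤ edist a z + edist z b := edist_triangle a z b
      _ < r / 2 + r / 2 := ENNReal.add_lt_add (mem_eball'.mp hza) (mem_eball.mp hzb)
      _ = r := ENNReal.add_halves r
    exact (hsep a ha b hb).not_gt this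
  have hSu : S ⊆ u := hS.subset_left_of_subset_union
    (isOpen_biUnion fun _ _ => isOpen_eball) (isOpen_biUnion fun _ _ => isOpen_eball) huv
    (hSst.trans (union_subset_union hsu htv)) (hSs.mono (inter_subset_inter_right S hsu))
  intro y hy
  exact (hSst hy).resolve_right fun hyt => huv.ne_of_mem (hSu hy) (htv hyt) rfl

theorem IsPreconnected.eq_of_subset_iUnion_of_pairwise_areSeparated {X ι : Type*}
    [PseudoEMetricSpace X] [Finite ι] {A : ι → Set X}
    (hA : Pairwise fun i j => AreSeparated (A i) (A j)) {S : Set X} (hS : IsPreconnected S)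
    (hSA : S ⊆ ⋃ k, A k) {i j : ι} (hi : (S ∩ A i).Nonempty) (hj : (S ∩ A j).Nonempty) :
    i = j := by
  by_contra hij
  have hsep : AreSeparated (A i) (⋃ k ∈ ({i}ᶜ : Set ι), A k) :=
    (AreSeparated.finite_iUnion_right_iff (toFinite _)).mpr fun k hk => hA (Ne.symm hk)
  have hSsplit : S ⊆ A i ∪ ⋃ k ∈ ({i}ᶜ : Set ι), A k := fun y hy => by
    obtain ⟨k, hk⟩ := mem_iUnion.mp (hSA hy)
    by_cases hki : k = i
    · exact .inl (hki ▸ hk)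
    · exact .inr (mem_biUnion hki hk)
  obtain ⟨y, hyS, hyj⟩ := hj
  exact (hA hij).disjoint.ne_of_mem (hS.subset_left_of_areSeparated hsep hSsplit hi hyS) hyj rfl

theorem Convex.inter_setOf_nonneg_of_eq_affine {𝕜 E : Type*} [Field 𝕜] [LinearOrder 𝕜]
    [IsStrictOrderedRing 𝕜] [AddCommGroup E] [Module 𝕜 E] {R : Set E} (hR : Convex 𝕜 R)
    {f : E → 𝕜} (L : E →ₗ[𝕜] 𝕜) (c : 𝕜) (hf : ∀ x ∈ R, f x = L x + c) :
    Convex 𝕜 (R ∩ {x | 0 ≤ f x}) := by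
  have : R ∩ {x | 0 ≤ f x} = R ∩ {x | -c ≤ L x} := by
    ext x
    simp only [mem_inter_iff, mem_ofPred_eq, neg_le_iff_add_nonneg']
    exact and_congr_right fun hx => by rw [hf x hx, add_comm]
  rw [this]
  exact hR.inter (convex_halfSpace_ge L.isLinear (-c))

/-- A function f : ℝ^d → ℝ that is affine on each region of a partition of
ℝ^d into fewer than r^n convex regions cannot be positive on the γ-interiors of the r^n
pairwise-separated pieces F_i(K_0) of K_n and negative outside K_n. -/
theorem no_shallow_separation
    (d r n N : ℕ) (hN : N < r ^ n)
    (f : EuclideanSpace ℝ (Fin d) → ℝ)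
    (R : Fin N → Set (EuclideanSpace ℝ (Fin d)))
    (hcover : (⋃ j, R j) = Set.univ)
    (hconv : ∀ j, Convex ℝ (R j))
    (haffine : ∀ j, ∃ (L : EuclideanSpace ℝ (Fin d) →ₗ[ℝ] ℝ) (c : ℝ),
      ∀ x ∈ R j, f x = L x + c)
    (A : (Fin n → Fin r) → Set (EuclideanSpace ℝ (Fin d)))
    (hsep : ∀ i j, i ≠ j → ∃ ε > 0, ∀ a ∈ A i, ∀ b ∈ A j, ε ≤ dist a b)
    (γ : ℝ) (hγ : 0 < γ)
    (hnonempty : ∀ i, {x | Metric.closedBall x γ ⊆ A i}.Nonempty) :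
    ¬ ((∀ i, ∀ x ∈ {x | Metric.closedBall x γ ⊆ A i}, 0 ≤ f x) ∧
       (∀ x, x ∉ ⋃ i, A i → f x < 0)) := by
  rintro ⟨hpos, hneg⟩
  choose x hx using hnonempty
  have hxA : ∀ i, x i ∈ A i := fun i => hx i (mem_closedBall_self hγ.le)
  choose g hg using fun i => mem_iUnion.mp (hcover ▸ mem_univ (x i) : x i ∈ ⋃ j, R j)
  obtain ⟨i, j, hij, hgij⟩ := Fintype.exists_ne_map_eq_of_card_lt g (by simpa using hN)
  obtain ⟨L, c, hL⟩ := haffine (g i)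
  -- `f ≥ 0` at both ends, so on the whole segment, which therefore never leaves `⋃ k, A k`.
  have hseg : segment ℝ (x i) (x j) ⊆ ⋃ k, A k := fun y hy => by
    by_contra hyA
    have hfy := ((hconv (g i)).inter_setOf_nonneg_of_eq_affine L c hL).segment_subset
      ⟨hg i, hpos i _ (hx i)⟩ ⟨hgij ▸ hg j, hpos j _ (hx j)⟩ hy
    exact (hneg y hyA).not_ge hfy.2
  exact hij <| (convex_segment _ _).isPreconnected.eq_of_subset_iUnion_of_pairwise_areSeparated
    (fun i j h => areSeparated_of_le_dist (hsep i j h)) hseg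
    ⟨x i, left_mem_segment ℝ _ _, hxA i⟩ ⟨x j, right_mem_segment ℝ _ _, hxA j⟩
end

section
/- Let w ∈ ℝ^s be drawn uniformly from [−1/(2s), 1/(2s)]^s, let z ∈ ℝ^s satisfy ‖z‖_∞ > b for some b > 0 in at least one coordinate (i.e., there is ℓ with |z_ℓ| > b), and fix a threshold τ > 0. Then P[|wᵀz + b| ≤ τ] ≤ 2sτ/b. -/
/-!
Split off a coordinate `ℓ` with `|z ℓ| > b`. For fixed values of the other coordinates,
`wᵀz + b` is an affine function of `w ℓ` with slope `z ℓ`, so the slice of the event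
`|wᵀz + b| ≤ τ` has length at most `2τ / |z ℓ| < 2τ / b`; by Fubini the event has volume at
most `2τ / b` times the volume of the remaining `(s - 1)`-dimensional face of the cube, and the
cube itself is that face times an interval of length `1 / s`.
-/

open MeasureTheory Set

theorem Real.volume_affine_preimage_Icc {a : ℝ} (ha : a ≠ 0) (r u v : ℝ) :
    volume ((fun x => x * a + r) ⁻¹' Icc u v) = ENNReal.ofReal ((v - u) / |a|) := by
  have hpre : (fun x => x * a + r) ⁻¹' Icc u v = (· * a) ⁻¹' Icc (u - r) (v - r) := by
    rw [← preimage_add_const_Icc]; rfl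
  rw [hpre, Real.volume_preimage_mul_right ha, Real.volume_Icc,
    ← ENNReal.ofReal_mul (by positivity), abs_inv, sub_sub_sub_cancel_right, inv_mul_eq_div]

theorem MeasureTheory.Measure.volume_prod_slab {E : Type*} [MeasurableSpace E] (μ : Measure E)
    [SFinite μ] {a : ℝ} (ha : a ≠ 0) {R : E → ℝ} (hR : Measurable R) {A : Set E}
    (hA : MeasurableSet A) (u v : ℝ) :
    (volume.prod μ) {p : ℝ × E | p.2 ∈ A ∧ p.1 * a + R p.2 ∈ Icc u v}
      = ENNReal.ofReal ((v - u) / |a|) * μ A := by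
  set slab := {p : ℝ × E | p.2 ∈ A ∧ p.1 * a + R p.2 ∈ Icc u v}
  have hmeas : MeasurableSet slab :=
    (measurable_snd hA).inter <|
      ((measurable_fst.mul_const a).add (hR.comp measurable_snd)) measurableSet_Icc
  have hslice : ∀ y, volume ((fun x => (x, y)) ⁻¹' slab)
      = A.indicator (fun _ => ENNReal.ofReal ((v - u) / |a|)) y := by
    intro y
    by_cases hy : y ∈ A
    · simp only [slab, preimage_ofPred_eq, hy, true_and, indicator_of_mem]
      exact Real.volume_affine_preimage_Icc ha (R y) u v
    · simp [slab, hy]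
  rw [Measure.prod_apply_symm hmeas]
  simp_rw [hslice]
  exact lintegral_indicator_const hA _

theorem volume_pi_inter_slab_le {n : ℕ} (ℓ : Fin (n + 1)) {z : Fin (n + 1) → ℝ}
    (hz : z ℓ ≠ 0) {I : Fin (n + 1) → Set ℝ} (hI : ∀ i, MeasurableSet (I i)) (u v : ℝ) :
    volume (univ.pi I ∩ {w | ∑ i, w i * z i ∈ Icc u v})
      ≤ ENNReal.ofReal ((v - u) / |z ℓ|) * volume (univ.pi fun j => I (ℓ.succAbove j)) := by
  set e := MeasurableEquiv.piFinSuccAbove (fun _ : Fin (n + 1) => ℝ) ℓ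
  set R : (Fin n → ℝ) → ℝ := fun y => ∑ j, y j * z (ℓ.succAbove j)
  have hR : Measurable R := by fun_prop
  have hsub : univ.pi I ∩ {w | ∑ i, w i * z i ∈ Icc u v} ⊆ e ⁻¹'
      {p | p.2 ∈ univ.pi (fun j => I (ℓ.succAbove j)) ∧ p.1 * z ℓ + R p.2 ∈ Icc u v} := by
    rintro w ⟨hwI, hwz⟩
    refine ⟨fun j _ => hwI _ trivial, ?_⟩
    simpa [e, R, Fin.removeNth, Fin.sum_univ_succAbove _ ℓ] using hwz
  calc _ ≤ _ := measure_mono hsub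
    _ = _ := (volume_preserving_piFinSuccAbove (fun _ => ℝ) ℓ).measure_preimage_equiv _
    _ = _ := by
      rw [Measure.volume_eq_prod]
      exact Measure.volume_prod_slab _ hz hR (MeasurableSet.univ_pi fun j => hI _) u v

theorem volume_pi_eq_mul_succAbove {n : ℕ} (ℓ : Fin (n + 1)) (I : Fin (n + 1) → Set ℝ) :
    volume (univ.pi I) = volume (I ℓ) * volume (univ.pi fun j => I (ℓ.succAbove j)) := by
  rw [volume_pi_pi, volume_pi_pi, Fin.prod_univ_succAbove _ ℓ]

theorem anticoncentration_uniform_weights_general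
    (s : ℕ) (z : Fin s → ℝ) (b τ : ℝ)
    (hb : 0 < b) (hτ : 0 < τ)
    (hz : ∃ ℓ, b < |z ℓ|) :
    volume {w : Fin s → ℝ |
        (∀ i, w i ∈ Set.Icc (-(1 / (2 * s)) : ℝ) (1 / (2 * s))) ∧
        |(∑ i, w i * z i) + b| ≤ τ}
      ≤ ENNReal.ofReal (2 * s * τ / b) *
        volume {w : Fin s → ℝ | ∀ i, w i ∈ Set.Icc (-(1 / (2 * s)) : ℝ) (1 / (2 * s))} := by
  obtain ⟨ℓ, hℓ⟩ := hz
  obtain ⟨n, rfl⟩ := Nat.exists_eq_succ_of_ne_zero ℓ.pos.ne'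
  have hzℓ : z ℓ ≠ 0 := abs_pos.mp (hb.trans hℓ)
  set c : ℝ := 1 / (2 * ((n + 1 : ℕ) : ℝ))
  set I : Fin (n + 1) → Set ℝ := fun _ => Icc (-c) c
  have hcube : {w : Fin (n + 1) → ℝ | ∀ i, w i ∈ Icc (-c) c} = univ.pi I := by
    ext; simp only [mem_ofPred_eq, mem_univ_pi, I]
  have hslab :
      {w : Fin (n + 1) → ℝ | (∀ i, w i ∈ Icc (-c) c) ∧ |(∑ i, w i * z i) + b| ≤ τ}
        = univ.pi I ∩ {w | ∑ i, w i * z i ∈ Icc (-τ - b) (τ - b)} := by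
    ext w
    simp only [mem_ofPred_eq, mem_inter_iff, mem_univ_pi, I, abs_le, mem_Icc]
    constructor <;> rintro ⟨h, _, _⟩ <;> exact ⟨h, by linarith, by linarith⟩
  rw [hslab, hcube, volume_pi_eq_mul_succAbove ℓ, ← mul_assoc]
  refine (volume_pi_inter_slab_le ℓ hzℓ (fun _ => measurableSet_Icc) _ _).trans ?_
  gcongr
  rw [Real.volume_Icc, ← ENNReal.ofReal_mul (by positivity)]
  refine ENNReal.ofReal_le_ofReal ?_
  calc (τ - b - (-τ - b)) / |z ℓ| = 2 * τ / |z ℓ| := by ring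
    _ ≤ 2 * τ / b := by gcongr
    _ = 2 * ((n + 1 : ℕ) : ℝ) * τ / b * (c - -c) := by simp only [c]; field_simp; ring

/-- For w uniform on [-1/(2s), 1/(2s)]^s, z with some coordinate of
absolute value more than b > 0, and τ > 0, the probability that |wᵀz + b| ≤ τ is at
most 2sτ/b (stated via Lebesgue measure on the cube). -/
theorem anticoncentration_uniform_weights
    (s : ℕ) (hs : 0 < s) (z : Fin s → ℝ) (b τ : ℝ)
    (hb : 0 < b) (hτ : 0 < τ)
    (hz : ∃ ℓ, b < |z ℓ|) :
    volume {w : Fin s → ℝ |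
        (∀ i, w i ∈ Set.Icc (-(1 / (2 * s)) : ℝ) (1 / (2 * s))) ∧
        |(∑ i, w i * z i) + b| ≤ τ}
      ≤ ENNReal.ofReal (2 * s * τ / b) *
        volume {w : Fin s → ℝ | ∀ i, w i ∈ Set.Icc (-(1 / (2 * s)) : ℝ) (1 / (2 * s))} :=
  anticoncentration_uniform_weights_general s z b τ hb hτ hz
end
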